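/- arXiv:2303.04402 — 2 statements merged into one kernel-verified Lean document; each statement's English description precedes it below -/
import Mathlib

section
/- If w : ℝ^p → ℝ is a probability density such that ∫_{ℝ^p} cos(t·z) w(t) dt = Ψ(‖z‖²) for all z ∈ ℝ^p for some kernel function Ψ, then the weighted L²-distance T = ∫_{ℝ^p} |φ_n(t) − φ_{0,m}(t)|² w(t) dt equals (1/n²)∑_{j,k=1}^n Ψ(‖X_j−X_k‖²) + (1/m²)∑_{j,k=1}^m Ψ(‖X_{0,j}−X_{0,k}‖²) − (2/(nm))∑_{j=1}^n∑_{k=1}^m Ψ(‖X_j−X_{0,k}‖²). -/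
open scoped ComplexConjugate InnerProductSpace
open MeasureTheory

/-! Since `Re (e^{ia} · conj e^{ib}) = cos (a - b)`, expanding `|φ_n(t) - φ_{0,m}(t)|²` turns it into
a combination of double sums of `cos ⟪t, x - y⟫` over pairs of data points. Integrating each such
term against `w` gives `Ψ (‖x - y‖²)` by hypothesis, and the integral commutes with the finite sums
because `|cos| ≤ 1` keeps every term integrable. -/

lemma Complex.real_inner_exp_mul_I (a b : ℝ) :
    ⟪Complex.exp (Complex.I * a), Complex.exp (Complex.I * b)⟫_ℝ = Real.cos (a - b) := by
  have hexponent : Complex.I * b + conj (Complex.I * a) = ((b - a : ℝ) : ℂ) * Complex.I := by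
    simp only [map_mul, Complex.conj_I, Complex.conj_ofReal]
    push_cast
    ring
  rw [Complex.inner, ← Complex.exp_conj, ← Complex.exp_add, hexponent,
    Complex.exp_ofReal_mul_I_re, ← Real.cos_neg, neg_sub]

lemma Complex.real_inner_sum_exp_mul_I {ι κ : Type*} [Fintype ι] [Fintype κ]
    (c : ι → ℝ) (d : κ → ℝ) :
    ⟪∑ j, Complex.exp (Complex.I * c j), ∑ k, Complex.exp (Complex.I * d k)⟫_ℝ
      = ∑ j, ∑ k, Real.cos (c j - d k) := by
  rw [sum_inner]
  simp only [inner_sum, Complex.real_inner_exp_mul_I]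

lemma norm_smul_sub_smul_sq_real {F : Type*} [NormedAddCommGroup F] [InnerProductSpace ℝ F]
    (a b : ℝ) (x y : F) :
    ‖a • x - b • y‖ ^ 2 = a ^ 2 * ⟪x, x⟫_ℝ + b ^ 2 * ⟪y, y⟫_ℝ - 2 * (a * b) * ⟪x, y⟫_ℝ := by
  rw [← real_inner_self_eq_norm_sq]
  simp only [inner_sub_left, inner_sub_right, real_inner_smul_left, real_inner_smul_right,
    real_inner_comm x y]
  ring

section CosInnerSum

variable {E : Type*} [NormedAddCommGroup E] [InnerProductSpace ℝ E] {ι κ : Type*}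
  [Fintype ι] [Fintype κ]

noncomputable def cosInnerSum (Y : ι → E) (Z : κ → E) (t : E) : ℝ :=
  ∑ j, ∑ k, Real.cos ⟪t, Y j - Z k⟫_ℝ

lemma norm_sub_exp_inner_sums_sq (a b : ℝ) (Y : ι → E) (Z : κ → E) (t : E) :
    ‖(a : ℂ) * ∑ j, Complex.exp (Complex.I * ⟪t, Y j⟫_ℝ)
        - (b : ℂ) * ∑ k, Complex.exp (Complex.I * ⟪t, Z k⟫_ℝ)‖ ^ 2
      = a ^ 2 * cosInnerSum Y Y t + b ^ 2 * cosInnerSum Z Z t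
        - 2 * (a * b) * cosInnerSum Y Z t := by
  simp only [← Complex.real_smul, norm_smul_sub_smul_sq_real, Complex.real_inner_sum_exp_mul_I,
    cosInnerSum, inner_sub_right]

variable [MeasurableSpace E] [OpensMeasurableSpace E] {μ : Measure E} {w : E → ℝ}

lemma MeasureTheory.Integrable.cos_inner_mul (hw : Integrable w μ) (z : E) :
    Integrable (fun t => Real.cos ⟪t, z⟫_ℝ * w t) μ :=
  hw.bdd_mul (c := 1) (by fun_prop) (.of_forall fun t => Real.abs_cos_le_one _)

lemma integrable_cosInnerSum_mul (hw : Integrable w μ) (Y : ι → E) (Z : κ → E) :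
    Integrable (fun t => cosInnerSum Y Z t * w t) μ := by
  simp only [cosInnerSum, Finset.sum_mul]
  exact integrable_finsetSum _ fun j _ => integrable_finsetSum _ fun k _ => hw.cos_inner_mul _

lemma integral_cosInnerSum_mul {Ψ : ℝ → ℝ} (hw : Integrable w μ)
    (hΨ : ∀ z, ∫ t, Real.cos ⟪t, z⟫_ℝ * w t ∂μ = Ψ (‖z‖ ^ 2)) (Y : ι → E) (Z : κ → E) :
    ∫ t, cosInnerSum Y Z t * w t ∂μ = ∑ j, ∑ k, Ψ (‖Y j - Z k‖ ^ 2) := by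
  simp only [cosInnerSum, Finset.sum_mul]
  rw [integral_finsetSum _ fun j _ => integrable_finsetSum _ fun k _ => (hw.cos_inner_mul _)]
  refine Finset.sum_congr rfl fun j _ => ?_
  rw [integral_finsetSum _ fun k _ => (hw.cos_inner_mul _)]
  exact Finset.sum_congr rfl fun k _ => hΨ _

end CosInnerSum

theorem weighted_L2_distance_kernel_form_general
    {p n m : ℕ}
    (X : Fin n → EuclideanSpace ℝ (Fin p))
    (X0 : Fin m → EuclideanSpace ℝ (Fin p))
    (w : EuclideanSpace ℝ (Fin p) → ℝ) (Ψ : ℝ → ℝ)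
    (hw_int : Integrable w)
    (hΨ : ∀ z : EuclideanSpace ℝ (Fin p),
        ∫ t, Real.cos (inner ℝ t z) * w t = Ψ (‖z‖ ^ 2)) :
    ∫ t, (‖
        ((1 / (n : ℂ)) * ∑ j, Complex.exp (Complex.I * ((inner ℝ t (X j) : ℝ) : ℂ))
          - (1 / (m : ℂ)) * ∑ j, Complex.exp (Complex.I * ((inner ℝ t (X0 j) : ℝ) : ℂ)))‖) ^ 2
        * w t
    = (1 / (n : ℝ) ^ 2) * ∑ j, ∑ k, Ψ (‖X j - X k‖ ^ 2)
      + (1 / (m : ℝ) ^ 2) * ∑ j, ∑ k, Ψ (‖X0 j - X0 k‖ ^ 2)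
      - (2 / ((n : ℝ) * (m : ℝ))) * ∑ j, ∑ k, Ψ (‖X j - X0 k‖ ^ 2) := by
  have hint {q r : ℕ} (Y : Fin q → EuclideanSpace ℝ (Fin p))
      (Z : Fin r → EuclideanSpace ℝ (Fin p)) (c : ℝ) :
      Integrable (fun t => c * (cosInnerSum Y Z t * w t)) :=
    (integrable_cosInnerSum_mul hw_int Y Z).const_mul c
  calc _ = ∫ t, 1 / (n : ℝ) ^ 2 * (cosInnerSum X X t * w t)
          + 1 / (m : ℝ) ^ 2 * (cosInnerSum X0 X0 t * w t)
          - 2 / ((n : ℝ) * m) * (cosInnerSum X X0 t * w t) := by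
        congr 1 with t
        have hexpand := norm_sub_exp_inner_sums_sq (1 / n : ℝ) (1 / m) X X0 t
        push_cast at hexpand
        rw [hexpand]
        ring
    _ = _ := by
        rw [integral_sub ?_ (hint X X0 _), integral_add (hint X X _) (hint X0 X0 _)]
        · simp only [integral_const_mul, integral_cosInnerSum_mul hw_int hΨ]
        · exact (hint X X _).add (hint X0 X0 _)

theorem weighted_L2_distance_kernel_form
    {p n m : ℕ} (hn : 1 ≤ n) (hm : 1 ≤ m)
    (X : Fin n → EuclideanSpace ℝ (Fin p))
    (X0 : Fin m → EuclideanSpace ℝ (Fin p))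
    (w : EuclideanSpace ℝ (Fin p) → ℝ) (Ψ : ℝ → ℝ)
    (hw_nonneg : ∀ t, 0 ≤ w t)
    (hw_int : Integrable w)
    (hw_prob : ∫ t, w t = 1)
    (hΨ : ∀ z : EuclideanSpace ℝ (Fin p),
        ∫ t, Real.cos (inner ℝ t z) * w t = Ψ (‖z‖ ^ 2)) :
    ∫ t, (‖
        ((1 / (n : ℂ)) * ∑ j, Complex.exp (Complex.I * ((inner ℝ t (X j) : ℝ) : ℂ))
          - (1 / (m : ℂ)) * ∑ j, Complex.exp (Complex.I * ((inner ℝ t (X0 j) : ℝ) : ℂ)))‖) ^ 2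
        * w t
    = (1 / (n : ℝ) ^ 2) * ∑ j, ∑ k, Ψ (‖X j - X k‖ ^ 2)
      + (1 / (m : ℝ) ^ 2) * ∑ j, ∑ k, Ψ (‖X0 j - X0 k‖ ^ 2)
      - (2 / ((n : ℝ) * (m : ℝ))) * ∑ j, ∑ k, Ψ (‖X j - X0 k‖ ^ 2) :=
  weighted_L2_distance_kernel_form_general X X0 w Ψ hw_int hΨ
end

section
/- (Canonical form of the multivariate skew-Laplace distribution) Let X ∼ SL_p(ξ, Ω, α) with α ≠ 0, where SL_p is the family with characteristic function φ(t) = exp(i t·ξ)/(1 + tᵀΩt − 2i t·α)^{(p+1)/2}. Set H = Ω^{−1/2}Q with Q = [v_1 … v_p] orthogonal and v_1 = Ω^{−1/2}α/‖Ω^{−1/2}α‖. Then X* = Hᵀ(X − ξ) ∼ SL_p(0, I, α*) with α* = (‖Ω^{−1/2}α‖, 0, …, 0)ᵀ; equivalently, the characteristic function of X* is t ↦ 1/(1 + ‖t‖² − 2i t₁‖Ω^{−1/2}α‖)^{(p+1)/2}. -/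
open Matrix MeasureTheory
open scoped BigOperators

theorem skew_laplace_canonical_form
    {p : ℕ} (hp : 0 < p) {W : Type*} [MeasurableSpace W] (μ : Measure W)
    [IsProbabilityMeasure μ]
    (X : W → (Fin p → ℝ))
    (Ω S Q : Matrix (Fin p) (Fin p) ℝ)
    (hΩ : Ω.PosDef) (hS : S.PosDef) (hSsq : S * S = Ω)
    (ξ α : Fin p → ℝ) (hα : α ≠ 0)
    (hQ : Qᵀ * Q = 1) (hQ' : Q * Qᵀ = 1)
    (hcol : ∀ i, Q i ⟨0, hp⟩
      = (S⁻¹ *ᵥ α) i / Real.sqrt (∑ j, ((S⁻¹ *ᵥ α) j) ^ 2))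
    (hcf : ∀ t : Fin p → ℝ,
      ∫ ω, Complex.exp (Complex.I * ((t ⬝ᵥ X ω : ℝ) : ℂ)) ∂μ
        = Complex.exp (Complex.I * ((t ⬝ᵥ ξ : ℝ) : ℂ))
          / ((1 + ((t ⬝ᵥ (Ω *ᵥ t) : ℝ) : ℂ)
              - 2 * Complex.I * ((t ⬝ᵥ α : ℝ) : ℂ)) ^ (((p : ℂ) + 1) / 2))) :
    ∀ t : Fin p → ℝ,
      ∫ ω, Complex.exp (Complex.I * ((t ⬝ᵥ ((S⁻¹ * Q)ᵀ *ᵥ (X ω - ξ)) : ℝ) : ℂ)) ∂μ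
        = 1 / ((1 + ((∑ i, (t i) ^ 2 : ℝ) : ℂ)
            - 2 * Complex.I * ((t ⟨0, hp⟩ * Real.sqrt (∑ j, ((S⁻¹ *ᵥ α) j) ^ 2) : ℝ) : ℂ))
            ^ (((p : ℂ) + 1) / 2)) := by
  intro t
  set v : Fin p → ℝ := S⁻¹ *ᵥ α with hv
  set c : ℝ := Real.sqrt (∑ j, v j ^ 2) with hc
  have hSdet : IsUnit S.det := isUnit_iff_ne_zero.mpr hS.det_pos.ne'
  have hSinv : S⁻¹ * S = 1 := Matrix.nonsing_inv_mul S hSdet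
  have hSinv' : S * S⁻¹ = 1 := Matrix.mul_nonsing_inv S hSdet
  have hSsymm : Sᵀ = S := hS.isHermitian
  have hv0 : v ≠ 0 := by
    intro h
    apply hα
    have : S *ᵥ v = S *ᵥ 0 := by rw [h]
    rw [hv, Matrix.mulVec_mulVec, hSinv', Matrix.one_mulVec, Matrix.mulVec_zero] at this
    exact this
  have hcpos : 0 < c := by
    rw [hc]
    apply Real.sqrt_pos.mpr
    obtain ⟨j, hj⟩ := Function.ne_iff.mp hv0
    exact Finset.sum_pos' (fun i _ => sq_nonneg _)
      ⟨j, Finset.mem_univ j, lt_of_le_of_ne (sq_nonneg _) (Ne.symm (pow_ne_zero 2 hj))⟩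
  set M : Matrix (Fin p) (Fin p) ℝ := S⁻¹ * Q with hM
  have hMT : Mᵀ = Qᵀ * S⁻¹ := by
    rw [hM, Matrix.transpose_mul, Matrix.transpose_nonsing_inv, hSsymm]
  have hMOM : Mᵀ * Ω * M = 1 := by
    rw [hMT, hM, ← hSsq]
    have h1 : S⁻¹ * (S * S) * S⁻¹ = 1 := by
      rw [← Matrix.mul_assoc, hSinv, Matrix.one_mul, hSinv']
    calc Qᵀ * S⁻¹ * (S * S) * (S⁻¹ * Q)
        = Qᵀ * (S⁻¹ * (S * S) * S⁻¹) * Q := by simp only [Matrix.mul_assoc]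
      _ = 1 := by rw [h1, Matrix.mul_one, hQ]
  have key : ∀ (A : Matrix (Fin p) (Fin p) ℝ) (u w : Fin p → ℝ),
      (A *ᵥ u) ⬝ᵥ w = u ⬝ᵥ (Aᵀ *ᵥ w) := by
    intro A u w
    rw [← Matrix.vecMul_transpose, ← Matrix.dotProduct_mulVec]
  set s : Fin p → ℝ := M *ᵥ t with hs
  have sΩs : s ⬝ᵥ (Ω *ᵥ s) = ∑ i, (t i) ^ 2 := by
    rw [hs, key]
    have h2 : Mᵀ *ᵥ (Ω *ᵥ (M *ᵥ t)) = t := by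
      simp only [Matrix.mulVec_mulVec, ← Matrix.mul_assoc]
      rw [hMOM, Matrix.one_mulVec]
    rw [h2]
    simp [dotProduct, sq]
  have hvcol : v = fun i => c * Q i ⟨0, hp⟩ := by
    funext i
    rw [hcol i]
    field_simp
  have sα : s ⬝ᵥ α = t ⟨0, hp⟩ * c := by
    have h1 : s ⬝ᵥ α = t ⬝ᵥ (Qᵀ *ᵥ v) := by
      rw [hs, key, hMT, hv, ← Matrix.mulVec_mulVec]
    have h2 : Qᵀ *ᵥ v = fun i => c * (1 : Matrix (Fin p) (Fin p) ℝ) i ⟨0, hp⟩ := by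
      funext i
      rw [hvcol]
      simp only [Matrix.mulVec, dotProduct, Matrix.transpose_apply]
      rw [← hQ]
      simp only [Matrix.mul_apply]
      rw [Finset.mul_sum]
      congr 1
      funext j
      simp [Matrix.transpose_apply]
      ring
    rw [h1, h2]
    simp [dotProduct, Matrix.one_apply, mul_comm]
  have harg : ∀ ω, t ⬝ᵥ ((S⁻¹ * Q)ᵀ *ᵥ (X ω - ξ)) = s ⬝ᵥ X ω - s ⬝ᵥ ξ := by
    intro ω
    rw [← hM, Matrix.dotProduct_mulVec, Matrix.vecMul_transpose, ← hs,
      dotProduct_sub]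
  calc ∫ ω, Complex.exp (Complex.I * ((t ⬝ᵥ ((S⁻¹ * Q)ᵀ *ᵥ (X ω - ξ)) : ℝ) : ℂ)) ∂μ
      = ∫ ω, Complex.exp (-(Complex.I * ((s ⬝ᵥ ξ : ℝ) : ℂ)))
          * Complex.exp (Complex.I * ((s ⬝ᵥ X ω : ℝ) : ℂ)) ∂μ := by
        congr 1
        funext ω
        rw [← Complex.exp_add]
        congr 1
        rw [harg ω]
        push_cast
        ring
    _ = Complex.exp (-(Complex.I * ((s ⬝ᵥ ξ : ℝ) : ℂ)))
          * ∫ ω, Complex.exp (Complex.I * ((s ⬝ᵥ X ω : ℝ) : ℂ)) ∂μ := by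
        rw [MeasureTheory.integral_const_mul]
    _ = 1 / ((1 + ((∑ i, (t i) ^ 2 : ℝ) : ℂ)
            - 2 * Complex.I * ((t ⟨0, hp⟩ * Real.sqrt (∑ j, ((S⁻¹ *ᵥ α) j) ^ 2) : ℝ) : ℂ))
            ^ (((p : ℂ) + 1) / 2)) := by
        rw [hcf s, sΩs, sα, ← hv, ← hc]
        rw [← mul_div_assoc, ← Complex.exp_add]
        simp
end
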